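/- Let (X, f) be a dynamical system on a connected compact uniform space. Then the following are equivalent: (1) f is topologically chain recurrent; (2) f is topologically chain transitive; (3) f is totally topologically chain transitive; (4) f is topologically chain mixing. -/

import Mathlib

open Set Filter Function

variable {X : Type*}

/-- An `E`-chain of length `n` from `x` to `y` for the map `f`. -/
def ChainFrom (f : X → X) (E : Set (X × X)) (n : ℕ) (x y : X) : Prop :=
  ∃ c : ℕ → X, c 0 = x ∧ c n = y ∧ ∀ i < n, (f (c i), c (i + 1)) ∈ E

/-- Topological chain transitivity on a uniform space. -/
def ChainTransitive [UniformSpace X] (f : X → X) : Prop :=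
  ∀ E ∈ uniformity X, ∀ x y : X, ∃ n ≥ 1, ChainFrom f E n x y

/-- Lengths of `E`-chains from `x` to itself (loops). -/
def LoopLengths (f : X → X) (E : Set (X × X)) (x : X) : Set ℕ :=
  {n | 1 ≤ n ∧ ChainFrom f E n x x}

/-- `g` is the greatest common divisor of the set `S` of naturals. -/
def IsGcdOfSet (g : ℕ) (S : Set ℕ) : Prop :=
  (∀ n ∈ S, g ∣ n) ∧ ∀ d : ℕ, (∀ n ∈ S, d ∣ n) → d ∣ g

/-- The relation `x ∼_E y`: some `E`-chain from `x` to `y` has length a multiple of `ι`. -/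
def SimE (f : X → X) (E : Set (X × X)) (ι : ℕ) (x y : X) : Prop :=
  ∃ n, ι ∣ n ∧ ChainFrom f E n x y

/-- Topological shadowing property on a uniform space. -/
def Shadowing [UniformSpace X] (f : X → X) : Prop :=
  ∀ E ∈ uniformity X, ∃ D ∈ uniformity X,
    ∀ x : ℕ → X, (∀ i, (f (x i), x (i + 1)) ∈ D) →
      ∃ y, ∀ n, (f^[n] y, x n) ∈ E

/-- Topological chain mixing on a uniform space. -/
def ChainMixing [UniformSpace X] (f : X → X) : Prop :=
  ∀ D ∈ uniformity X, ∀ x y : X, ∃ N ≥ 1, ∀ n ≥ N, ChainFrom f D n x y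

/-- A non-wandering point of `f`. -/
def NonWandering [TopologicalSpace X] (f : X → X) (x : X) : Prop :=
  ∀ V ∈ nhds x, ∃ n ≥ 1, (V ∩ f^[n] ⁻¹' V).Nonempty

/-- Topological transitivity. -/
def TopTransitive [TopologicalSpace X] (f : X → X) : Prop :=
  ∀ U V : Set X, IsOpen U → IsOpen V → U.Nonempty → V.Nonempty →
    ∃ n : ℕ, (U ∩ f^[n] ⁻¹' V).Nonempty

/-- A syndetic set of natural numbers (bounded gaps). -/
def Syndetic (A : Set ℕ) : Prop :=
  ∃ k : ℕ, ∀ n : ℕ, ∃ m, n ≤ m ∧ m ≤ n + k ∧ m ∈ A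

/-- A minimal (almost periodic) point of `f`. -/
def MinimalPt [TopologicalSpace X] (f : X → X) (y : X) : Prop :=
  ∀ V ∈ nhds y, Syndetic {n : ℕ | f^[n] y ∈ V}

/-- Equicontinuity of a dynamical system on a uniform space. -/
def Equicont [UniformSpace X] (f : X → X) : Prop :=
  ∀ E ∈ uniformity X, ∃ D ∈ uniformity X, ∀ n : ℕ, ∀ p ∈ D, (f^[n] p.1, f^[n] p.2) ∈ E

/-!
For an open entourage `E`, the set of points reachable from `x` by `E`-chains is open; if every
point lies on an `E`-loop its complement is open too, so by connectedness it is everything.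
Likewise, if all `E`-loops at `x` had lengths divisible by `d`, the points reachable by chains of
length divisible by `d` would form a nonempty clopen set, hence contain `f x`, forcing `d ∣ 1`.
The additively closed set of loop lengths therefore has gcd one and contains all large integers,
which gives chain mixing. Uniform continuity makes `D`-chains of length `m` end `E`-close to the
true orbit, so a `D`-chain of `f` of length `m * N` yields an `E`-chain of `f^[m]` of length `N`.
-/

def ChainRecurrent [UniformSpace X] (f : X → X) : Prop :=
  ∀ E ∈ uniformity X, ∀ x : X, ∃ n ≥ 1, ChainFrom f E n x x

theorem Nat.exists_forall_ge_mem_of_setGcd_eq_one {S : Set ℕ}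
    (hS : ∀ a ∈ S, ∀ b ∈ S, a + b ∈ S) (h : Nat.setGcd S = 1) : ∃ N, ∀ n ≥ N, n ∈ S := by
  have hclosure : ∀ n ∈ AddSubmonoid.closure S, n = 0 ∨ n ∈ S := by
    intro n hn
    induction hn using AddSubmonoid.closure_induction with
    | mem a ha => exact .inr ha
    | zero => exact .inl rfl
    | add a b _ _ ha hb =>
      rcases ha with rfl | ha
      · simpa using hb
      rcases hb with rfl | hb
      · exact .inr ha
      exact .inr (hS a ha b hb)
  obtain ⟨N, hN⟩ := Nat.exists_mem_closure_of_ge S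
  refine ⟨N + 1, fun n hn => ?_⟩
  exact (hclosure n (hN n (by omega) (h ▸ one_dvd n))).resolve_left (by omega)

section Chains

variable {f : X → X} {E D : Set (X × X)} {m n : ℕ} {x y z : X}

theorem ChainFrom.mono (h : E ⊆ D) (hc : ChainFrom f E n x y) : ChainFrom f D n x y :=
  let ⟨c, hc0, hcn, hc⟩ := hc
  ⟨c, hc0, hcn, fun i hi => h (hc i hi)⟩

theorem chainFrom_add_iff :
    ChainFrom f E (n + m) x z ↔ ∃ y, ChainFrom f E n x y ∧ ChainFrom f E m y z := by
  constructor
  · rintro ⟨c, hc0, hcz, hc⟩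
    exact ⟨c n, ⟨c, hc0, rfl, fun i hi => hc i (by omega)⟩,
      ⟨fun i => c (n + i), rfl, hcz, fun i hi => hc (n + i) (by omega)⟩⟩
  · rintro ⟨y, ⟨c, hc0, hcy, hc⟩, ⟨d, hd0, hdz, hd⟩⟩
    have hright : ∀ i, n ≤ i → (if i ≤ n then c i else d (i - n)) = d (i - n) := by
      intro i hi
      split_ifs with h
      · obtain rfl : i = n := le_antisymm h hi
        simp [hcy, hd0]
      · rfl
    refine ⟨fun i => if i ≤ n then c i else d (i - n), by simp [hc0],
      (hright (n + m) le_self_add).trans (by rwa [Nat.add_sub_cancel_left]), fun i hi => ?_⟩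
    beta_reduce
    rcases lt_or_ge i n with h | h
    · simpa [h.le, show i + 1 ≤ n by omega] using hc i h
    · rw [hright i h, hright (i + 1) (by omega), show i + 1 - n = i - n + 1 by omega]
      exact hd _ (by omega)

theorem ChainFrom.append (h₁ : ChainFrom f E n x y) (h₂ : ChainFrom f E m y z) :
    ChainFrom f E (n + m) x z :=
  chainFrom_add_iff.2 ⟨y, h₁, h₂⟩

theorem chainFrom_zero : ChainFrom f E 0 x y ↔ x = y :=
  ⟨fun ⟨_, hc0, hcy, _⟩ => hc0.symm.trans hcy, fun h => ⟨fun _ => x, rfl, h, by simp⟩⟩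

theorem chainFrom_one : ChainFrom f E 1 x y ↔ (f x, y) ∈ E := by
  constructor
  · rintro ⟨c, rfl, rfl, hc⟩
    exact hc 0 one_pos
  · intro h
    exact ⟨fun i => if i = 0 then x else y, rfl, rfl, fun i hi => by simpa [Nat.lt_one_iff.1 hi]⟩

theorem chainFrom_succ_iff :
    ChainFrom f E (n + 1) x z ↔ ∃ y, ChainFrom f E n x y ∧ (f y, z) ∈ E := by
  simp_rw [chainFrom_add_iff, chainFrom_one]

theorem chainFrom_succ_iff' :
    ChainFrom f E (n + 1) x z ↔ ∃ y, (f x, y) ∈ E ∧ ChainFrom f E n y z := by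
  rw [add_comm, chainFrom_add_iff]
  simp_rw [chainFrom_one]

theorem loopLengths_add_mem (hm : m ∈ LoopLengths f E x) (hn : n ∈ LoopLengths f E x) :
    m + n ∈ LoopLengths f E x :=
  ⟨Nat.le_add_right_of_le hm.1, hm.2.append hn.2⟩

theorem ChainFrom.iterate_of_mul (hD : ∀ a b, ChainFrom f D m a b → (f^[m] a, b) ∈ E)
    (N : ℕ) (h : ChainFrom f D (m * N) x y) : ChainFrom f^[m] E N x y := by
  induction N generalizing y with
  | zero => exact chainFrom_zero.2 (chainFrom_zero.1 h)
  | succ N ih =>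
    obtain ⟨w, hxw, hwy⟩ := chainFrom_add_iff.1 (Nat.mul_succ m N ▸ h)
    exact chainFrom_succ_iff.2 ⟨w, ih hxw, hD w y hwy⟩

variable [UniformSpace X]

theorem isOpen_setOf_exists_chainFrom (hE : IsOpen E) {S : Set ℕ} (hS : 0 ∉ S) (x : X) :
    IsOpen {y | ∃ n ∈ S, ChainFrom f E n x y} := by
  refine isOpen_iff_mem_nhds.2 fun y ⟨n, hnS, hc⟩ => ?_
  obtain ⟨k, rfl⟩ := Nat.exists_eq_succ_of_ne_zero (ne_of_mem_of_not_mem hnS hS)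
  obtain ⟨w, hw, hwy⟩ := chainFrom_succ_iff.1 hc
  filter_upwards [(hE.preimage (Continuous.prodMk_right (f w))).mem_nhds hwy] with u hu
  exact ⟨k + 1, hnS, chainFrom_succ_iff.2 ⟨w, hw, hu⟩⟩

theorem isOpen_setOf_chainFrom_succ_to (hf : Continuous f) (hE : IsOpen E) (n : ℕ) (z : X) :
    IsOpen {x | ChainFrom f E (n + 1) x z} := by
  simp_rw [chainFrom_succ_iff', ofPred_exists, ofPred_and]
  exact isOpen_iUnion fun w => (hE.preimage (hf.prodMk continuous_const)).inter isOpen_const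

theorem chainTransitive_of_chainRecurrent [ConnectedSpace X] (hf : Continuous f)
    (h : ChainRecurrent f) : ChainTransitive f := by
  intro E hE x y
  obtain ⟨E', ⟨hE', hE'o⟩, hE'E⟩ := uniformity_hasBasis_open.mem_iff.mp hE
  set A := {z | ∃ n ∈ Ici 1, ChainFrom f E' n x z}
  have hA : IsClopen A := by
    refine ⟨isOpen_compl_iff.mp (isOpen_iff_mem_nhds.2 fun z hz => ?_),
      isOpen_setOf_exists_chainFrom hE'o (by simp) x⟩
    obtain ⟨n, hn, hloop⟩ := h E' hE' z
    obtain ⟨k, rfl⟩ := Nat.exists_eq_add_of_le' hn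
    refine mem_of_superset ((isOpen_setOf_chainFrom_succ_to hf hE'o k z).mem_nhds hloop) ?_
    rintro u hu ⟨n', hn', hxu⟩
    exact hz ⟨n' + (k + 1), by simp only [mem_Ici]; omega, hxu.append hu⟩
  obtain ⟨n, hn, hxx⟩ := h E' hE' x
  obtain ⟨n, hn, hxy⟩ : y ∈ A := hA.eq_univ ⟨x, n, hn, hxx⟩ ▸ mem_univ y
  exact ⟨n, hn, hxy.mono hE'E⟩

theorem ChainTransitive.dvd_one_of_forall_dvd_loopLengths [ConnectedSpace X]
    (h : ChainTransitive f) (hE : E ∈ uniformity X) (hEo : IsOpen E) (x : X) {d : ℕ}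
    (hd : ∀ n ∈ LoopLengths f E x, d ∣ n) : d ∣ 1 := by
  -- closing two chains `x → z` with one chain `z → x` shows their lengths agree modulo `d`
  have hcongr : ∀ {z n n'}, ChainFrom f E n x z → ChainFrom f E n' x z → d ∣ n' → d ∣ n := by
    intro z n n' hn hn' hdn'
    obtain ⟨k, hk, hzx⟩ := h E hE z x
    have hdk := (Nat.dvd_add_right hdn').1 (hd _ ⟨by omega, hn'.append hzx⟩)
    exact (Nat.dvd_add_left hdk).1 (hd _ ⟨by omega, hn.append hzx⟩)
  set C := {z | ∃ n ∈ {n | 1 ≤ n ∧ d ∣ n}, ChainFrom f E n x z}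
  have hCcompl : Cᶜ = {z | ∃ n ∈ {n | 1 ≤ n ∧ ¬ d ∣ n}, ChainFrom f E n x z} := by
    ext z
    constructor
    · intro hz
      obtain ⟨n, hn, hc⟩ := h E hE x z
      exact ⟨n, ⟨hn, fun hdn => hz ⟨n, ⟨hn, hdn⟩, hc⟩⟩, hc⟩
    · rintro ⟨n, ⟨-, hdn⟩, hc⟩ ⟨n', ⟨-, hdn'⟩, hc'⟩
      exact hdn (hcongr hc hc' hdn')
  have hC : IsClopen C :=
    ⟨isOpen_compl_iff.mp (hCcompl ▸ isOpen_setOf_exists_chainFrom hEo (by simp) x),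
      isOpen_setOf_exists_chainFrom hEo (by simp) x⟩
  obtain ⟨n, hn, hxx⟩ := h E hE x x
  obtain ⟨n', ⟨-, hdn'⟩, hfx⟩ : f x ∈ C :=
    hC.eq_univ ⟨x, n, ⟨hn, hd n ⟨hn, hxx⟩⟩, hxx⟩ ▸ mem_univ (f x)
  exact hcongr (chainFrom_one.2 (refl_mem_uniformity hE)) hfx hdn'

theorem ChainTransitive.exists_forall_ge_mem_loopLengths [ConnectedSpace X]
    (h : ChainTransitive f) (hE : E ∈ uniformity X) (hEo : IsOpen E) (x : X) :
    ∃ N, ∀ n ≥ N, n ∈ LoopLengths f E x :=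
  Nat.exists_forall_ge_mem_of_setGcd_eq_one (fun _ ha _ hb => loopLengths_add_mem ha hb) <|
    Nat.dvd_one.1 <| h.dvd_one_of_forall_dvd_loopLengths hE hEo x fun _ => Nat.setGcd_dvd_of_mem

theorem ChainTransitive.chainMixing [ConnectedSpace X] (h : ChainTransitive f) :
    ChainMixing f := by
  intro D hD x y
  obtain ⟨E, ⟨hE, hEo⟩, hED⟩ := uniformity_hasBasis_open.mem_iff.mp hD
  obtain ⟨N, hN⟩ := h.exists_forall_ge_mem_loopLengths hE hEo x
  obtain ⟨m, -, hxy⟩ := h E hE x y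
  refine ⟨N + m + 1, by omega, fun n hn => ?_⟩
  have hchain := ((hN (n - m) (by omega)).2.append hxy).mono hED
  rwa [Nat.sub_add_cancel (by omega)] at hchain

theorem UniformContinuous.exists_forall_chainFrom_iterate_mem (hf : UniformContinuous f)
    (m : ℕ) (hE : E ∈ uniformity X) :
    ∃ D ∈ uniformity X, ∀ a b, ChainFrom f D m a b → (f^[m] a, b) ∈ E := by
  induction m generalizing E with
  | zero =>
    refine ⟨E, hE, fun a b hab => ?_⟩
    rw [iterate_zero_apply, chainFrom_zero.1 hab]
    exact refl_mem_uniformity hE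
  | succ m ih =>
    obtain ⟨E', hE', hE'E⟩ := comp_mem_uniformity_sets hE
    obtain ⟨D, hD, hDm⟩ := ih (hf hE')
    refine ⟨D ∩ E', inter_mem hD hE', fun a b hab => ?_⟩
    obtain ⟨w, haw, hwb⟩ := chainFrom_succ_iff.1 hab
    rw [iterate_succ_apply']
    exact hE'E (SetRel.prodMk_mem_comp (hDm a w (haw.mono inter_subset_left)) hwb.2)

theorem ChainMixing.chainTransitive_iterate (hf : UniformContinuous f) (h : ChainMixing f)
    (hm : 1 ≤ m) : ChainTransitive f^[m] := by
  intro E hE x y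
  obtain ⟨D, hD, hDm⟩ := hf.exists_forall_chainFrom_iterate_mem m hE
  obtain ⟨N, hN, hmix⟩ := h D hD x y
  exact ⟨N, hN, ChainFrom.iterate_of_mul hDm N (hmix (m * N) (Nat.le_mul_of_pos_left N hm))⟩

end Chains

theorem chain_properties_tfae_general [UniformSpace X] [ConnectedSpace X]
    (f : X → X) (hf : UniformContinuous f) :
    List.TFAE
      [∀ E ∈ uniformity X, ∀ x : X, ∃ n ≥ 1, ChainFrom f E n x x,
       ChainTransitive f,
       ∀ n : ℕ, 1 ≤ n → ChainTransitive (f^[n]),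
       ChainMixing f] := by
  tfae_have 1 → 2 := chainTransitive_of_chainRecurrent hf.continuous
  tfae_have 2 → 4 := ChainTransitive.chainMixing
  tfae_have 4 → 3 := fun h _ hm => h.chainTransitive_iterate hf hm
  tfae_have 3 → 1 := fun h E hE x => by simpa only [iterate_one] using h 1 le_rfl E hE x x
  tfae_finish

theorem chain_properties_tfae [UniformSpace X] [CompactSpace X] [ConnectedSpace X]
    (f : X → X) (hf : UniformContinuous f) :
    List.TFAE
      [∀ E ∈ uniformity X, ∀ x : X, ∃ n ≥ 1, ChainFrom f E n x x,
       ChainTransitive f,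
       ∀ n : ℕ, 1 ≤ n → ChainTransitive (f^[n]),
       ChainMixing f] :=
  chain_properties_tfae_general f hf
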